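/- arXiv:1702.06751 — 3 statements merged into one kernel-verified Lean document; each statement's English description precedes it below -/
import Mathlib

section
/- If f is convex, L-smooth, with minimizer x*, and x(t) solves the gradient flow x'(t) = −∇f(x(t)) with x(0) = x0, then f(x(t)) − f(x*) ≤ ‖x0 − x*‖² / (t + 2/L) for all t ≥ 0. -/
/-!
Write `g t = f (x t) - f x*` and `R = ‖x0 - x*‖`. Along the flow `g' = -‖∇f (x t)‖²`, and
convexity makes `‖x t - x*‖` nonincreasing and gives `g ≤ ⟪∇f (x t), x t - x*⟫ ≤ R ‖∇f (x t)‖`.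
Hence `g' ≤ -g² / R²`: the quantity `R² / g` grows at least at unit rate, and it starts at least
at `2 / L` because `∇f x* = 0` and the descent lemma give `g 0 ≤ L R² / 2`.
-/

open Set AffineMap
open scoped RealInnerProductSpace

theorem add_mul_le_of_sq_le_neg_mul_deriv {g g' : ℝ → ℝ} {K c t : ℝ} (ht : 0 ≤ t)
    (hg : ∀ s ∈ Icc 0 t, HasDerivAt g (g' s) s) (hpos : ∀ s ∈ Icc 0 t, 0 < g s)
    (hsq : ∀ s ∈ Icc 0 t, g s ^ 2 ≤ -(K * g' s)) (h0 : c * g 0 ≤ K) :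
    (t + c) * g t ≤ K := by
  have hinv : ∀ s ∈ Icc 0 t, HasDerivAt (fun s => K / g s) ((0 * g s - K * g' s) / g s ^ 2) s :=
    fun s hs => (hasDerivAt_const s K).div (hg s hs) (hpos s hs).ne'
  have hslope : ∀ s ∈ Ico 0 t, (1 : ℝ) ≤ (0 * g s - K * g' s) / g s ^ 2 := fun s hs => by
    rw [le_div_iff₀ (pow_pos (hpos s (Ico_subset_Icc_self hs)) 2)]
    linarith [hsq s (Ico_subset_Icc_self hs)]
  have := image_le_of_deriv_right_le_deriv_boundary (f := fun s => s + c) (f' := fun _ => 1)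
    (continuousOn_id.add continuousOn_const)
    (fun s _ => ((hasDerivAt_id s).add_const c).hasDerivWithinAt)
    (by simpa [le_div_iff₀ (hpos 0 (left_mem_Icc.2 ht))] using h0)
    (fun s hs => (hinv s hs).continuousAt.continuousWithinAt)
    (fun s hs => (hinv s (Ico_subset_Icc_self hs)).hasDerivWithinAt) hslope (right_mem_Icc.2 ht)
  rwa [le_div_iff₀ (hpos t (right_mem_Icc.2 ht))] at this

section

variable {E : Type*} [NormedAddCommGroup E] [InnerProductSpace ℝ E] [CompleteSpace E]
  {f : E → ℝ} {x : ℝ → E}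

theorem HasGradientAt.comp_hasDerivAt {g : E} {γ : ℝ → E} {γ' : E} {t : ℝ}
    (hf : HasGradientAt f g (γ t)) (hγ : HasDerivAt γ γ' t) :
    HasDerivAt (fun s => f (γ s)) ⟪g, γ'⟫ t := by
  simpa [Function.comp_def, InnerProductSpace.toDual_apply_apply] using
    hf.hasFDerivAt.comp_hasDerivAt t hγ

theorem ConvexOn.inner_gradient_le_sub {s : Set E} (hconv : ConvexOn ℝ s f) {a b g : E}
    (ha : a ∈ s) (hb : b ∈ s) (hf : HasGradientAt f g a) :
    ⟪g, b - a⟫ ≤ f b - f a := by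
  have hline : ConvexOn ℝ (lineMap a b ⁻¹' s) fun τ : ℝ => f (lineMap a b τ) :=
    hconv.comp_affineMap _
  have hderiv : HasDerivAt (fun τ : ℝ => f (lineMap a b τ)) ⟪g, b - a⟫ 0 :=
    (by simpa using hf : HasGradientAt f g (lineMap a b (0 : ℝ))).comp_hasDerivAt
      hasDerivAt_lineMap
  simpa [slope_def_field] using
    hline.le_slope_of_hasDerivAt (by simpa using ha) (by simpa using hb) one_pos hderiv

theorem sub_le_of_norm_gradient_le {L : ℝ} (hf : Differentiable ℝ f) {a : E}
    (hgrad : ∀ y, ‖gradient f y‖ ≤ L * ‖y - a‖) (b : E) :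
    f b - f a ≤ L / 2 * ‖b - a‖ ^ 2 := by
  set φ : ℝ → ℝ := fun τ => f (lineMap a b τ)
  have hφ : ∀ τ, HasDerivAt φ ⟪gradient f (lineMap a b τ), b - a⟫ τ := fun τ =>
    (hf _).hasGradientAt.comp_hasDerivAt hasDerivAt_lineMap
  have hB : ∀ τ : ℝ, HasDerivAt (fun τ => f a + L / 2 * ‖b - a‖ ^ 2 * τ ^ 2)
      (L * ‖b - a‖ ^ 2 * τ) τ := fun τ =>
    (((hasDerivAt_pow 2 τ).const_mul _).const_add _).congr_deriv (by ring)
  have hbound : ∀ τ ∈ Ico (0 : ℝ) 1,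
      ⟪gradient f (lineMap a b τ), b - a⟫ ≤ L * ‖b - a‖ ^ 2 * τ := by
    intro τ hτ
    have hdist : ‖lineMap a b τ - a‖ = τ * ‖b - a‖ := by
      rw [lineMap_apply_module', add_sub_cancel_right, norm_smul,
        Real.norm_of_nonneg hτ.1]
    calc ⟪gradient f (lineMap a b τ), b - a⟫
        ≤ ‖gradient f (lineMap a b τ)‖ * ‖b - a‖ := real_inner_le_norm _ _
      _ ≤ L * (τ * ‖b - a‖) * ‖b - a‖ := by
          gcongr
          exact hdist ▸ hgrad _
      _ = L * ‖b - a‖ ^ 2 * τ := by ring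
  have := image_le_of_deriv_right_le_deriv_boundary
    (fun τ _ => (hφ τ).continuousAt.continuousWithinAt) (fun τ _ => (hφ τ).hasDerivWithinAt)
    (by simp [φ]) (fun τ _ => (hB τ).continuousAt.continuousWithinAt)
    (fun τ _ => (hB τ).hasDerivWithinAt) hbound (right_mem_Icc.2 zero_le_one)
  simp only [φ, lineMap_apply_one, one_pow, mul_one] at this
  linarith

theorem hasDerivAt_comp_of_gradientFlow (hf : Differentiable ℝ f)
    (hx : ∀ t, HasDerivAt x (-(gradient f (x t))) t) (t : ℝ) :
    HasDerivAt (fun t => f (x t)) (-‖gradient f (x t)‖ ^ 2) t := by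
  simpa [inner_neg_right, real_inner_self_eq_norm_sq] using
    (hf (x t)).hasGradientAt.comp_hasDerivAt (hx t)

theorem antitone_comp_of_gradientFlow (hf : Differentiable ℝ f)
    (hx : ∀ t, HasDerivAt x (-(gradient f (x t))) t) : Antitone fun t => f (x t) :=
  antitone_of_hasDerivAt_nonpos (hasDerivAt_comp_of_gradientFlow hf hx) fun _ =>
    neg_nonpos.2 (sq_nonneg _)

theorem antitone_norm_sub_sq_of_gradientFlow (hf : Differentiable ℝ f)
    (hconv : ConvexOn ℝ univ f) {xstar : E} (hmin : ∀ y, f xstar ≤ f y)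
    (hx : ∀ t, HasDerivAt x (-(gradient f (x t))) t) : Antitone fun t => ‖x t - xstar‖ ^ 2 := by
  refine antitone_of_hasDerivAt_nonpos (fun t => ((hx t).sub_const xstar).norm_sq) fun t => ?_
  have hsupport := hconv.inner_gradient_le_sub (mem_univ (x t)) (mem_univ xstar)
    (hf (x t)).hasGradientAt
  have hinner : ⟪x t - xstar, -gradient f (x t)⟫ = ⟪gradient f (x t), xstar - x t⟫ := by
    rw [inner_neg_right, real_inner_comm, ← inner_neg_right, neg_sub]
  show 2 * ⟪x t - xstar, -gradient f (x t)⟫ ≤ 0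
  linarith [hmin (x t)]

theorem sq_sub_le_of_gradientFlow (hf : Differentiable ℝ f)
    (hconv : ConvexOn ℝ univ f) {xstar : E} (hmin : ∀ y, f xstar ≤ f y)
    (hx : ∀ t, HasDerivAt x (-(gradient f (x t))) t) {t : ℝ} (ht : 0 ≤ t) :
    (f (x t) - f xstar) ^ 2 ≤ ‖x 0 - xstar‖ ^ 2 * ‖gradient f (x t)‖ ^ 2 := by
  have hgap : f (x t) - f xstar ≤ ‖gradient f (x t)‖ * ‖x t - xstar‖ := by
    have hsupport := hconv.inner_gradient_le_sub (mem_univ (x t)) (mem_univ xstar)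
      (hf (x t)).hasGradientAt
    have hcs := neg_le_of_abs_le (abs_real_inner_le_norm (gradient f (x t)) (xstar - x t))
    rw [norm_sub_rev] at hcs
    linarith
  calc (f (x t) - f xstar) ^ 2 ≤ (‖gradient f (x t)‖ * ‖x t - xstar‖) ^ 2 :=
        pow_le_pow_left₀ (sub_nonneg.2 (hmin _)) hgap 2
    _ ≤ ‖gradient f (x t)‖ ^ 2 * ‖x 0 - xstar‖ ^ 2 := by
        rw [mul_pow]
        exact mul_le_mul_of_nonneg_left
          (antitone_norm_sub_sq_of_gradientFlow hf hconv hmin hx ht) (sq_nonneg _)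
    _ = ‖x 0 - xstar‖ ^ 2 * ‖gradient f (x t)‖ ^ 2 := mul_comm _ _

end

theorem gradient_flow_convex_rate
    {d : ℕ} (f : EuclideanSpace ℝ (Fin d) → ℝ) (L : ℝ) (hL : 0 < L)
    (hf : Differentiable ℝ f)
    (hconv : ConvexOn ℝ Set.univ f)
    (hsmooth : ∀ x y, ‖gradient f x - gradient f y‖ ≤ L * ‖x - y‖)
    (xstar : EuclideanSpace ℝ (Fin d)) (hmin : ∀ y, f xstar ≤ f y)
    (x0 : EuclideanSpace ℝ (Fin d))
    (x : ℝ → EuclideanSpace ℝ (Fin d)) (hx0 : x 0 = x0)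
    (hx : ∀ t, HasDerivAt x (-(gradient f (x t))) t) :
    ∀ t, 0 ≤ t → f (x t) - f xstar ≤ ‖x0 - xstar‖ ^ 2 / (t + 2 / L) := by
  intro t ht
  have hgrad_star : gradient f xstar = 0 := by
    rw [gradient, IsLocalMin.fderiv_eq_zero (Filter.Eventually.of_forall hmin), map_zero]
  have hinit : f x0 - f xstar ≤ L / 2 * ‖x0 - xstar‖ ^ 2 :=
    sub_le_of_norm_gradient_le hf (fun y => by simpa [hgrad_star] using hsmooth y xstar) x0
  rcases le_or_gt (f (x t) - f xstar) 0 with hgap | hgap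
  · exact hgap.trans (by positivity)
  rw [le_div_iff₀ (by positivity), mul_comm]
  refine add_mul_le_of_sq_le_neg_mul_deriv ht
    (fun s _ => (hasDerivAt_comp_of_gradientFlow hf hx s).sub_const _)
    (fun s hs => hgap.trans_le (sub_le_sub_right (antitone_comp_of_gradientFlow hf hx hs.2) _))
    (fun s hs => ?_) ?_
  · simpa [← hx0] using sq_sub_le_of_gradientFlow hf hconv hmin hx hs.1
  · calc 2 / L * (f (x 0) - f xstar) ≤ 2 / L * (L / 2 * ‖x0 - xstar‖ ^ 2) := by
          rw [hx0]; gcongr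
      _ = ‖x0 - xstar‖ ^ 2 := by field_simp
end

section
/- Let 0 < μ ≤ L, h > 0, and a linear two-step method with coefficients ρ₀, ρ₁, σ₀, σ₁ satisfy (ρ₁ + μhσ₁)² ≤ 4(ρ₀ + μhσ₀) and (ρ₁ + Lhσ₁)² ≤ 4(ρ₀ + Lhσ₀). Then for every λ ∈ [μ, L] the roots of π_λ(z) = z² + (ρ₁ + λhσ₁)z + (ρ₀ + λhσ₀) are complex conjugates, and max over λ ∈ [μ, L] of the squared modulus of the roots equals max{ρ₀ + μhσ₀, ρ₀ + Lhσ₀}. -/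
/-! The discriminant `λ ↦ (ρ₁ + λhσ₁)² - 4(ρ₀ + λhσ₀)` is convex in `λ`, so it is nonpositive on
all of `[μ, L]` because it is at the endpoints. A real quadratic `z² + bz + c` with `b² ≤ 4c` has the
roots `(-b ± i√(4c - b²))/2`, both of squared modulus `c`. Hence the squared modulus of the roots
of `π_λ` is `ρ₀ + λhσ₀`, affine in `λ`, and its maximum over `[μ, L]` is attained at an endpoint. -/

open Set Complex ComplexConjugate

lemma convexOn_sq_affine_sub_affine (b s c t : ℝ) :
    ConvexOn ℝ univ fun x : ℝ => (b + x * s) ^ 2 - 4 * (c + x * t) := by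
  refine ⟨convex_univ, fun x _ y _ p q hp hq hpq => ?_⟩
  obtain rfl : q = 1 - p := by linarith
  simp only [smul_eq_mul]
  nlinarith [mul_nonneg (mul_nonneg hp hq) (sq_nonneg ((x - y) * s))]

lemma sq_add_mul_le_of_mem_Icc {b s c t μ L x : ℝ} (hx : x ∈ Icc μ L)
    (hμ : (b + μ * s) ^ 2 ≤ 4 * (c + μ * t)) (hL : (b + L * s) ^ 2 ≤ 4 * (c + L * t)) :
    (b + x * s) ^ 2 ≤ 4 * (c + x * t) := by
  have hmax := (convexOn_sq_affine_sub_affine b s c t).le_max_of_mem_Icc trivial trivial hx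
  linarith [max_le (sub_nonpos.2 hμ) (sub_nonpos.2 hL)]

lemma add_mul_le_max_of_mem_Icc {c t μ L x : ℝ} (hx : x ∈ Icc μ L) :
    c + x * t ≤ max (c + μ * t) (c + L * t) := by
  rcases le_total 0 t with ht | ht
  · exact le_max_of_le_right (by nlinarith [hx.2])
  · exact le_max_of_le_left (by nlinarith [hx.1])

lemma conj_quadratic_eq_zero {b c : ℝ} {z : ℂ} (hz : z ^ 2 + b * z + c = 0) :
    conj z ^ 2 + b * conj z + c = 0 := by
  simpa using congrArg conj hz

lemma quadratic_eq_zero_iff_of_sq_le {b c : ℝ} (hd : b ^ 2 ≤ 4 * c) (z : ℂ) :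
    z ^ 2 + b * z + c = 0 ↔
      z = (-b + √(4 * c - b ^ 2) * I) / 2 ∨ z = (-b - √(4 * c - b ^ 2) * I) / 2 := by
  have hdisc : discrim (1 : ℂ) b c = (√(4 * c - b ^ 2) * I) * (√(4 * c - b ^ 2) * I) := by
    have : ((√(4 * c - b ^ 2) : ℝ) : ℂ) ^ 2 = 4 * c - b ^ 2 := by
      exact_mod_cast Real.sq_sqrt (sub_nonneg.2 hd)
    rw [discrim]
    linear_combination this - (√(4 * c - b ^ 2) : ℂ) ^ 2 * I_sq
  have := quadratic_eq_zero_iff one_ne_zero hdisc z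
  simpa only [one_mul, mul_one, sq] using this

lemma sq_norm_neg_add_mul_I_div_two {b c δ : ℝ} (hδ : δ ^ 2 = 4 * c - b ^ 2) :
    ‖(-b + δ * I) / 2‖ ^ 2 = c := by
  have : (-b + δ * I) / 2 = ((-b / 2 : ℝ) : ℂ) + ((δ / 2 : ℝ) : ℂ) * I := by
    push_cast; ring
  rw [Complex.sq_norm, this, normSq_add_mul_I]
  linarith

lemma sq_norm_of_quadratic_eq_zero {b c : ℝ} (hd : b ^ 2 ≤ 4 * c) {z : ℂ}
    (hz : z ^ 2 + b * z + c = 0) : ‖z‖ ^ 2 = c := by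
  have hs := Real.sq_sqrt (sub_nonneg.2 hd)
  rcases (quadratic_eq_zero_iff_of_sq_le hd z).1 hz with rfl | rfl
  · exact sq_norm_neg_add_mul_I_div_two hs
  · rw [show -(b : ℂ) - √(4 * c - b ^ 2) * I = -b + ((-√(4 * c - b ^ 2) : ℝ) : ℂ) * I by
      push_cast; ring]
    exact sq_norm_neg_add_mul_I_div_two (by rwa [neg_sq])

lemma exists_quadratic_eq_zero_sq_norm_eq {b c : ℝ} (hd : b ^ 2 ≤ 4 * c) :
    ∃ z : ℂ, z ^ 2 + b * z + c = 0 ∧ ‖z‖ ^ 2 = c :=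
  have hz := (quadratic_eq_zero_iff_of_sq_le hd ((-b + √(4 * c - b ^ 2) * I) / 2)).2 (Or.inl rfl)
  ⟨_, hz, sq_norm_of_quadratic_eq_zero hd hz⟩

theorem two_step_complex_roots_max_modulus_general
    (μ L h ρ₀ ρ₁ σ₀ σ₁ : ℝ) (hμL : μ ≤ L)
    (h1 : (ρ₁ + μ * h * σ₁) ^ 2 ≤ 4 * (ρ₀ + μ * h * σ₀))
    (h2 : (ρ₁ + L * h * σ₁) ^ 2 ≤ 4 * (ρ₀ + L * h * σ₀)) :
    (∀ lam ∈ Set.Icc μ L, ∀ z : ℂ,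
      z ^ 2 + ((ρ₁ + lam * h * σ₁ : ℝ) : ℂ) * z + ((ρ₀ + lam * h * σ₀ : ℝ) : ℂ) = 0 →
        (starRingEnd ℂ z) ^ 2 + ((ρ₁ + lam * h * σ₁ : ℝ) : ℂ) * (starRingEnd ℂ z) +
          ((ρ₀ + lam * h * σ₀ : ℝ) : ℂ) = 0)
    ∧ IsGreatest
        {m : ℝ | ∃ lam ∈ Set.Icc μ L, ∃ z : ℂ,
          z ^ 2 + ((ρ₁ + lam * h * σ₁ : ℝ) : ℂ) * z + ((ρ₀ + lam * h * σ₀ : ℝ) : ℂ) = 0 ∧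
          m = ‖z‖ ^ 2}
        (max (ρ₀ + μ * h * σ₀) (ρ₀ + L * h * σ₀)) := by
  refine ⟨fun _ _ _ => conj_quadratic_eq_zero, ?_, ?_⟩
  · rcases le_total (ρ₀ + μ * h * σ₀) (ρ₀ + L * h * σ₀) with hle | hle
    · obtain ⟨z, hz, hnorm⟩ := exists_quadratic_eq_zero_sq_norm_eq h2
      exact ⟨L, ⟨hμL, le_rfl⟩, z, hz, by rw [max_eq_right hle, hnorm]⟩
    · obtain ⟨z, hz, hnorm⟩ := exists_quadratic_eq_zero_sq_norm_eq h1
      exact ⟨μ, ⟨le_rfl, hμL⟩, z, hz, by rw [max_eq_left hle, hnorm]⟩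
  · rintro _ ⟨lam, hlam, z, hz, rfl⟩
    have hd : (ρ₁ + lam * h * σ₁) ^ 2 ≤ 4 * (ρ₀ + lam * h * σ₀) := by
      simp only [mul_assoc] at h1 h2 ⊢
      exact sq_add_mul_le_of_mem_Icc hlam h1 h2
    rw [sq_norm_of_quadratic_eq_zero hd hz]
    simpa only [mul_assoc] using add_mul_le_max_of_mem_Icc (c := ρ₀) (t := h * σ₀) hlam

theorem two_step_complex_roots_max_modulus
    (μ L h ρ₀ ρ₁ σ₀ σ₁ : ℝ) (hμ : 0 < μ) (hμL : μ ≤ L) (hh : 0 < h)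
    (h1 : (ρ₁ + μ * h * σ₁) ^ 2 ≤ 4 * (ρ₀ + μ * h * σ₀))
    (h2 : (ρ₁ + L * h * σ₁) ^ 2 ≤ 4 * (ρ₀ + L * h * σ₀)) :
    (∀ lam ∈ Set.Icc μ L, ∀ z : ℂ,
      z ^ 2 + ((ρ₁ + lam * h * σ₁ : ℝ) : ℂ) * z + ((ρ₀ + lam * h * σ₀ : ℝ) : ℂ) = 0 →
        (starRingEnd ℂ z) ^ 2 + ((ρ₁ + lam * h * σ₁ : ℝ) : ℂ) * (starRingEnd ℂ z) +
          ((ρ₀ + lam * h * σ₀ : ℝ) : ℂ) = 0)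
    ∧ IsGreatest
        {m : ℝ | ∃ lam ∈ Set.Icc μ L, ∃ z : ℂ,
          z ^ 2 + ((ρ₁ + lam * h * σ₁ : ℝ) : ℂ) * z + ((ρ₀ + lam * h * σ₀ : ℝ) : ℂ) = 0 ∧
          m = ‖z‖ ^ 2}
        (max (ρ₀ + μ * h * σ₀) (ρ₀ + L * h * σ₀)) :=
  two_step_complex_roots_max_modulus_general μ L h ρ₀ ρ₁ σ₀ σ₁ hμL h1 h2
end

section
/- Let 0 < μ ≤ L, β = (1 − √(μ/L))/(1 + √(μ/L)), and h = 1/√(μL). Then for every λ ∈ [μ, L], both roots of the polynomial π_λ(z) = z² − (1 + β²)z + β² + λh(1 − β²)z have modulus at most β (equivalently, the discriminant (−(1+β²)+λh(1−β²))² ≤ 4β² so roots are complex of modulus exactly β, or real with modulus ≤ β at endpoints). -/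
/-!
A real monic quadratic `z² + b z + c` with `b² ≤ 4c` has a double real root `-b/2` or two
conjugate roots; either way the product of the roots is `c`, so every root has modulus `√c`.
With `s = √(μ/L)` one has `λh(1 - β²) = 4λ / (L(1 + s)²)`, which increases from `(1 - β)²`
at `λ = μ = s²L` to `(1 + β)²` at `λ = L`. Hence `b = λh(1 - β²) - (1 + β²)` satisfies
`|b| ≤ 2β`, and every root of `π_λ` has modulus exactly `β`.
-/

open Set

theorem Complex.sq_norm_eq_of_quadratic_root {b c : ℝ} {z : ℂ} (hdisc : b ^ 2 ≤ 4 * c)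
    (hz : z ^ 2 + (b : ℂ) * z + (c : ℂ) = 0) : ‖z‖ ^ 2 = c := by
  have hre : z.re ^ 2 - z.im ^ 2 + b * z.re + c = 0 := by
    simpa [sq] using congrArg Complex.re hz
  have him : z.im * (2 * z.re + b) = 0 := by
    have := congrArg Complex.im hz
    simp only [sq, Complex.add_im, Complex.mul_im, Complex.ofReal_re, Complex.ofReal_im,
      Complex.zero_im] at this
    linear_combination this
  have hvertex : 2 * z.re + b = 0 := by
    rcases mul_eq_zero.mp him with hy | hx
    · rw [hy] at hre
      nlinarith [sq_nonneg (2 * z.re + b)]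
    · exact hx
  rw [Complex.sq_norm, Complex.normSq_apply]
  linear_combination -hre + z.re * hvertex

theorem sq_sub_one_add_sq_le_of_mem_Icc {a β : ℝ} (ha : a ∈ Icc ((1 - β) ^ 2) ((1 + β) ^ 2)) :
    (a - (1 + β ^ 2)) ^ 2 ≤ 4 * β ^ 2 := by
  have := sq_le_sq' (by nlinarith [ha.1]) (by nlinarith [ha.2] : a - (1 + β ^ 2) ≤ 2 * β)
  linarith

theorem heavyBall_gain_mem_Icc {s L lam : ℝ} (hs : 0 < s) (hL : 0 < L)
    (hlam : lam ∈ Icc (s ^ 2 * L) L) :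
    lam * (1 / (s * L)) * (1 - ((1 - s) / (1 + s)) ^ 2) ∈
      Icc ((1 - (1 - s) / (1 + s)) ^ 2) ((1 + (1 - s) / (1 + s)) ^ 2) := by
  have hgain : ∀ t, t * (1 / (s * L)) * (1 - ((1 - s) / (1 + s)) ^ 2) =
      t * (4 / (L * (1 + s) ^ 2)) := by
    intro t
    field_simp
    ring
  have hlow : (1 - (1 - s) / (1 + s)) ^ 2 = s ^ 2 * L * (4 / (L * (1 + s) ^ 2)) := by
    field_simp; ring
  have hhigh : (1 + (1 - s) / (1 + s)) ^ 2 = L * (4 / (L * (1 + s) ^ 2)) := by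
    field_simp; ring
  rw [hgain, hlow, hhigh]
  exact ⟨by gcongr; exact hlam.1, by gcongr; exact hlam.2⟩

theorem heavy_ball_roots_modulus_le_beta
    (μ L β h : ℝ) (hμ : 0 < μ) (hμL : μ ≤ L)
    (hβ : β = (1 - Real.sqrt (μ / L)) / (1 + Real.sqrt (μ / L)))
    (hh : h = 1 / Real.sqrt (μ * L)) :
    ∀ lam ∈ Set.Icc μ L, ∀ z : ℂ,
      z ^ 2 + ((lam * h * (1 - β ^ 2) - (1 + β ^ 2) : ℝ) : ℂ) * z + ((β ^ 2 : ℝ) : ℂ) = 0 →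
        ‖z‖ ≤ β := by
  intro lam hlam z hz
  have hL : 0 < L := hμ.trans_le hμL
  set s := Real.sqrt (μ / L)
  have hs : 0 < s := Real.sqrt_pos.mpr (div_pos hμ hL)
  have hμs : μ = s ^ 2 * L := by
    rw [Real.sq_sqrt (div_pos hμ hL).le, div_mul_cancel₀ _ hL.ne']
  have hsqrt : Real.sqrt (μ * L) = s * L := by
    rw [hμs, mul_assoc, Real.sqrt_mul (sq_nonneg s), Real.sqrt_sq hs.le, ← sq,
      Real.sqrt_sq hL.le]
  have hs1 : s ≤ 1 := Real.sqrt_le_one.mpr ((div_le_one hL).mpr hμL)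
  have hβ0 : 0 ≤ β := hβ ▸ div_nonneg (sub_nonneg.mpr hs1) (by positivity)
  rw [hsqrt] at hh
  subst hβ hh
  have hdisc := sq_sub_one_add_sq_le_of_mem_Icc (heavyBall_gain_mem_Icc hs hL (hμs ▸ hlam))
  have hnorm := Complex.sq_norm_eq_of_quadratic_root hdisc hz
  exact (sq_eq_sq₀ (norm_nonneg z) hβ0).mp hnorm |>.le
end
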